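/- arXiv:2306.00382 — 7 statements merged into one kernel-verified Lean document; each statement's English description precedes it below -/
import Mathlib

section
/- In the toy setting, the IPTW estimand based on Q equals the true ATE (1/2, −1/2) if and only if q0 = p0 and q1 = p1. -/
/-- Toy setting: the IPTW estimand based on model propensities (q0, q1)
equals the true ATE (1/2, −1/2) if and only if q0 = p0 and q1 = p1. -/
theorem toy_IPTW_eq_ATE_iff_calibrated (p0 p1 q0 q1 : ℝ)
    (hp0 : 0 < p0 ∧ p0 < 1) (hp1 : 0 < p1 ∧ p1 < 1)
    (hq0 : 0 < q0 ∧ q0 < 1) (hq1 : 0 < q1 ∧ q1 < 1)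
    (y : Bool → Bool → ℝ × ℝ)
    (hy : ∀ x t, y x t = ((if x && t then (1 : ℝ) else 0), (if !x && !t then (1 : ℝ) else 0))) :
    ((1/2 : ℝ) • ((p0 / q0) • y false true - ((1 - p0) / (1 - q0)) • y false false)
      + (1/2 : ℝ) • ((p1 / q1) • y true true - ((1 - p1) / (1 - q1)) • y true false))
      = ((1/2 : ℝ), (-(1/2) : ℝ)) ↔ (q0 = p0 ∧ q1 = p1) := by
  have hq0' : (1 : ℝ) - q0 ≠ 0 := by linarith [hq0.2]
  have hq1' : q1 ≠ 0 := ne_of_gt hq1.1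
  simp only [hy, Prod.mk.injEq, Prod.ext_iff, Prod.smul_mk, Prod.sub_def, Prod.add_def,
    smul_eq_mul]
  norm_num
  constructor
  · rintro ⟨h1, h2⟩
    constructor
    · field_simp at h2; linarith
    · field_simp at h1; linarith
  · rintro ⟨rfl, rfl⟩
    constructor
    · field_simp
    · field_simp
end

section
/- Let X take values in a finite set 𝒳, with true propensity p: 𝒳 → (0,1) and model propensity Q: 𝒳 → (0,1). Suppose Q is miscalibrated at level q', i.e., there exists q' in the range of Q with P(T=1 | Q(X)=q') ≠ q'. Define the outcome Y = T·𝟙[Q(X)=q']. Then the IPTW estimand based on Q equals P(T=1 | Q(X)=q')·P(Q(X)=q')/q', while the true ATE equals P(Q(X)=q'); hence the IPTW estimand differs from the true ATE. -/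
/-! Since Y vanishes when T = 0, only the treated term of the IPTW estimand survives and it reweights
P(T = 1, Q(X) = q') by 1/q', whereas the individual effect of Y is 𝟙[Q(X) = q'] at every x.
The two agree only if P(T = 1 | Q(X) = q') = q'. -/

theorem eq_of_mul_div_eq_right {K : Type*} [Field K] {a b c : K} (hb : b ≠ 0)
    (h : a * b / c = b) : a = c := by
  rw [mul_div_right_comm, mul_eq_right₀ hb] at h
  have hc : c ≠ 0 := (div_ne_zero_iff.mp (h ▸ one_ne_zero)).2
  exact (div_eq_one_iff_eq hc).mp h

section BucketOutcome

variable {𝒳 : Type*} [Fintype 𝒳] {Q : 𝒳 → ℝ} {q' : ℝ} {y : 𝒳 → Bool → ℝ}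

theorem iptw_eq_of_bucket_outcome (pX p : 𝒳 → ℝ)
    (hy : ∀ x t, y x t = if t = true ∧ Q x = q' then 1 else 0) :
    ∑ x, pX x * (p x * y x true / Q x - (1 - p x) * y x false / (1 - Q x))
      = (∑ x ∈ Finset.univ.filter (fun x => Q x = q'), p x * pX x) / q' := by
  rw [Finset.sum_filter, Finset.sum_div]
  refine Finset.sum_congr rfl fun x _ => ?_
  by_cases h : Q x = q'
  · simp only [hy, h, and_self, if_true, mul_one, Bool.false_eq_true, false_and, if_false,
      mul_zero, zero_div, sub_zero]
    ring
  · simp [hy, h]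

theorem ate_eq_of_bucket_outcome (pX : 𝒳 → ℝ)
    (hy : ∀ x t, y x t = if t = true ∧ Q x = q' then 1 else 0) :
    ∑ x, (y x true - y x false) * pX x = ∑ x ∈ Finset.univ.filter (fun x => Q x = q'), pX x := by
  rw [Finset.sum_filter]
  refine Finset.sum_congr rfl fun x _ => ?_
  by_cases h : Q x = q' <;> simp [hy, h]

end BucketOutcome

theorem miscalibrated_IPTW_differs_general {𝒳 : Type*} [Fintype 𝒳]
    (pX p Q : 𝒳 → ℝ)
    (hpX : ∀ x, 0 < pX x)
    (q' : ℝ) (hq'range : ∃ x, Q x = q')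
    -- P(Q(X) = q') and P(T=1 | Q(X) = q')
    (PB PT1B : ℝ)
    (hPB : PB = ∑ x ∈ Finset.univ.filter (fun x => Q x = q'), pX x)
    (hPT1B : PT1B = (∑ x ∈ Finset.univ.filter (fun x => Q x = q'), p x * pX x) / PB)
    (hmis : PT1B ≠ q')
    -- outcome Y = T · 𝟙[Q(X) = q'] (deterministic given (X, T))
    (y : 𝒳 → Bool → ℝ)
    (hy : ∀ x t, y x t = if t = true ∧ Q x = q' then 1 else 0) :
    -- IPTW estimand, true ATE, and their disagreement
    (∑ x, pX x * (p x * y x true / Q x - (1 - p x) * y x false / (1 - Q x)))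
        = PT1B * PB / q' ∧
    (∑ x, (y x true - y x false) * pX x) = PB ∧
    (∑ x, pX x * (p x * y x true / Q x - (1 - p x) * y x false / (1 - Q x)))
        ≠ (∑ x, (y x true - y x false) * pX x) := by
  obtain ⟨x₀, hx₀⟩ := hq'range
  have hPB_pos : 0 < PB := hPB ▸ Finset.sum_pos (fun x _ => hpX x) ⟨x₀, by simp [hx₀]⟩
  have hIPTW : ∑ x, pX x * (p x * y x true / Q x - (1 - p x) * y x false / (1 - Q x))
      = PT1B * PB / q' := by
    rw [iptw_eq_of_bucket_outcome pX p hy, hPT1B, div_mul_cancel₀ _ hPB_pos.ne']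
  have hATE : ∑ x, (y x true - y x false) * pX x = PB :=
    (ate_eq_of_bucket_outcome pX hy).trans hPB.symm
  refine ⟨hIPTW, hATE, fun h => hmis ?_⟩
  rw [hIPTW, hATE] at h
  exact eq_of_mul_div_eq_right hPB_pos.ne' h

/-- Finite 𝒳, true propensity p(x)=P(T=1|X=x) ∈ (0,1), model Q : 𝒳 → (0,1).
Suppose Q is miscalibrated at a level q' in its range:
P(T=1 | Q(X)=q') ≠ q'.  With outcome Y = T·𝟙[Q(X)=q'], the IPTW estimand
equals P(T=1|Q(X)=q')·P(Q(X)=q')/q' while the true ATE equals P(Q(X)=q');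
hence the two differ. -/
theorem miscalibrated_IPTW_differs {𝒳 : Type*} [Fintype 𝒳]
    (pX p Q : 𝒳 → ℝ)
    (hpX : ∀ x, 0 < pX x) (hsum : ∑ x, pX x = 1)
    (hp : ∀ x, 0 < p x ∧ p x < 1) (hQ : ∀ x, 0 < Q x ∧ Q x < 1)
    (q' : ℝ) (hq'range : ∃ x, Q x = q')
    -- P(Q(X) = q') and P(T=1 | Q(X) = q')
    (PB PT1B : ℝ)
    (hPB : PB = ∑ x ∈ Finset.univ.filter (fun x => Q x = q'), pX x)
    (hPT1B : PT1B = (∑ x ∈ Finset.univ.filter (fun x => Q x = q'), p x * pX x) / PB)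
    (hmis : PT1B ≠ q')
    -- outcome Y = T · 𝟙[Q(X) = q'] (deterministic given (X, T))
    (y : 𝒳 → Bool → ℝ)
    (hy : ∀ x t, y x t = if t = true ∧ Q x = q' then 1 else 0) :
    -- IPTW estimand, true ATE, and their disagreement
    (∑ x, pX x * (p x * y x true / Q x - (1 - p x) * y x false / (1 - Q x)))
        = PT1B * PB / q' ∧
    (∑ x, (y x true - y x false) * pX x) = PB ∧
    (∑ x, pX x * (p x * y x true / Q x - (1 - p x) * y x false / (1 - Q x)))
        ≠ (∑ x, (y x true - y x false) * pX x) :=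
  miscalibrated_IPTW_differs_general pX p Q hpX q' hq'range PB PT1B hPB hPT1B hmis y hy
end

section
/- If there exists q' in the range of Q with P(T=1 | Q(X)=q') ≠ q', then there exists a deterministic outcome function y: 𝒳 × {0,1} → ℝ such that the IPTW estimand based on Q differs from the true ATE. -/
open scoped Classical

/-- If Q is miscalibrated at some level q' in its range
(P(T=1 | Q(X)=q') ≠ q'), then there exists a deterministic outcome function
y : 𝒳 × {0,1} → ℝ for which the IPTW estimand based on Q differs from the
true ATE. -/
theorem exists_outcome_IPTW_differs {𝒳 : Type*} [Fintype 𝒳]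
    (pX p Q : 𝒳 → ℝ)
    (hpX : ∀ x, 0 < pX x) (hsum : ∑ x, pX x = 1)
    (hp : ∀ x, 0 < p x ∧ p x < 1) (hQ : ∀ x, 0 < Q x ∧ Q x < 1)
    (q' : ℝ) (hq'range : ∃ x, Q x = q')
    (hmis : (∑ x ∈ Finset.univ.filter (fun x => Q x = q'), p x * pX x) /
            (∑ x ∈ Finset.univ.filter (fun x => Q x = q'), pX x) ≠ q') :
    ∃ y : 𝒳 → Bool → ℝ,
      (∑ x, pX x * (p x * y x true / Q x - (1 - p x) * y x false / (1 - Q x)))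
        ≠ (∑ x, (y x true - y x false) * pX x) := by
  obtain ⟨x₀, hx₀⟩ := hq'range
  have hq0 : 0 < q' := hx₀ ▸ (hQ x₀).1
  set S := Finset.univ.filter (fun x => Q x = q') with hS
  have hD : 0 < ∑ x ∈ S, pX x :=
    Finset.sum_pos (fun x _ => hpX x) ⟨x₀, by simp [hS, hx₀]⟩
  refine ⟨fun x t => if Q x = q' then (cond t 1 0 : ℝ) else 0, ?_⟩
  show (∑ x, pX x * (p x * (if Q x = q' then (1:ℝ) else 0) / Q x
      - (1 - p x) * (if Q x = q' then (0:ℝ) else 0) / (1 - Q x)))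
      ≠ (∑ x, ((if Q x = q' then (1:ℝ) else 0) - (if Q x = q' then (0:ℝ) else 0)) * pX x)
  have hL : (∑ x, pX x * (p x * (if Q x = q' then (1:ℝ) else 0) / Q x
      - (1 - p x) * (if Q x = q' then (0:ℝ) else 0) / (1 - Q x)))
      = (∑ x ∈ S, p x * pX x) / q' := by
    rw [Finset.sum_div, hS, Finset.sum_filter]
    apply Finset.sum_congr rfl
    intro x _
    by_cases h : Q x = q'
    · have hq := ne_of_gt hq0
      simp only [h, if_pos rfl, if_true]
      field_simp
      ring
    · simp [h]
  have hR : (∑ x, ((if Q x = q' then (1:ℝ) else 0) - (if Q x = q' then (0:ℝ) else 0)) * pX x)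
      = ∑ x ∈ S, pX x := by
    rw [hS, Finset.sum_filter]
    apply Finset.sum_congr rfl
    intro x _
    by_cases h : Q x = q' <;> simp [h]
  rw [hL, hR]
  intro hcontra
  apply hmis
  rw [div_eq_iff (ne_of_gt hD)]
  rw [div_eq_iff (ne_of_gt hq0)] at hcontra
  linarith
end

section
/- Suppose Q: 𝒳 → [0,1] (𝒳 finite, P(X=x)>0 for all x) satisfies separability — P(T=1|X=x1) ≠ P(T=1|X=x2) implies Q(x1) ≠ Q(x2) — and calibration — P(T=1 | Q(X)=q) = q for all q in the range of Q. Then Q(x) = P(T=1|X=x) for every x ∈ 𝒳. -/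
open scoped Classical

/-- Separability (Q(x1)=Q(x2) ⟹ P(T=1|X=x1)=P(T=1|X=x2)) together with
calibration (P(T=1 | Q(X)=q) = q for every q in the range of Q) implies that
Q recovers the true propensity: Q(x) = P(T=1|X=x) for every x. -/
theorem separable_calibrated_eq_propensity {𝒳 : Type*} [Fintype 𝒳]
    (pX p Q : 𝒳 → ℝ)
    (hpX : ∀ x, 0 < pX x) (hsum : ∑ x, pX x = 1)
    (hQrange : ∀ x, 0 ≤ Q x ∧ Q x ≤ 1)
    (hsep : ∀ x1 x2, Q x1 = Q x2 → p x1 = p x2)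
    (hcal : ∀ q ∈ Set.range Q,
      (∑ x ∈ Finset.univ.filter (fun x => Q x = q), p x * pX x) /
      (∑ x ∈ Finset.univ.filter (fun x => Q x = q), pX x) = q) :
    ∀ x, Q x = p x := by
  intro x
  have hmem : x ∈ Finset.univ.filter (fun y => Q y = Q x) := by simp
  have hpos : 0 < ∑ y ∈ Finset.univ.filter (fun y => Q y = Q x), pX y :=
    Finset.sum_pos (fun y _ => hpX y) ⟨x, hmem⟩
  have hnum : (∑ y ∈ Finset.univ.filter (fun y => Q y = Q x), p y * pX y)
      = p x * ∑ y ∈ Finset.univ.filter (fun y => Q y = Q x), pX y := by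
    rw [Finset.mul_sum]
    apply Finset.sum_congr rfl
    intro y hy
    simp only [Finset.mem_filter] at hy
    rw [hsep y x hy.2]
  have := hcal (Q x) ⟨x, rfl⟩
  rw [hnum, mul_div_assoc, div_self hpos.ne', mul_one] at this
  exact this.symm
end

section
/- Under separability and calibration of Q (finite 𝒳, positivity 0 < P(T=1|X=x) < 1), the IPTW estimand based on Q equals the true ATE: E[TY/Q(X) − (1−T)Y/(1−Q(X))] = Σ_x (E[Y|X=x,T=1] − E[Y|X=x,T=0])P(X=x). -/
open scoped Classical

/-- Under separability and calibration of Q (finite 𝒳, positivity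
0 < P(T=1|X=x) < 1), the IPTW estimand based on Q equals the true ATE.
Here m x t = E[Y | X=x, T=t] denotes the conditional outcome mean, so that
E[TY/Q(X) − (1−T)Y/(1−Q(X))]
  = Σ_x P(X=x)·(p(x)·m(x,1)/Q(x) − (1−p(x))·m(x,0)/(1−Q(x)))
and the true ATE is Σ_x (m(x,1) − m(x,0))·P(X=x). -/
theorem separable_calibrated_IPTW_eq_ATE {𝒳 : Type*} [Fintype 𝒳]
    (pX p Q : 𝒳 → ℝ) (m : 𝒳 → Bool → ℝ)
    (hpX : ∀ x, 0 < pX x) (hsum : ∑ x, pX x = 1)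
    (hp : ∀ x, 0 < p x ∧ p x < 1)
    (hQrange : ∀ x, 0 ≤ Q x ∧ Q x ≤ 1)
    (hsep : ∀ x1 x2, Q x1 = Q x2 → p x1 = p x2)
    (hcal : ∀ q ∈ Set.range Q,
      (∑ x ∈ Finset.univ.filter (fun x => Q x = q), p x * pX x) /
      (∑ x ∈ Finset.univ.filter (fun x => Q x = q), pX x) = q) :
    (∑ x, pX x * (p x * m x true / Q x - (1 - p x) * m x false / (1 - Q x)))
      = ∑ x, (m x true - m x false) * pX x := by
  have hQp : ∀ x, Q x = p x := by
    intro x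
    have h := hcal (Q x) ⟨x, rfl⟩
    have hnum : (∑ y ∈ Finset.univ.filter (fun y => Q y = Q x), p y * pX y)
        = p x * ∑ y ∈ Finset.univ.filter (fun y => Q y = Q x), pX y := by
      rw [Finset.mul_sum]
      apply Finset.sum_congr rfl
      intro y hy
      rw [hsep y x (Finset.mem_filter.mp hy).2]
    have hpos : 0 < ∑ y ∈ Finset.univ.filter (fun y => Q y = Q x), pX y :=
      Finset.sum_pos (fun y _ => hpX y) ⟨x, by simp⟩
    rw [hnum, mul_div_assoc, div_self hpos.ne', mul_one] at h
    exact h.symm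
  apply Finset.sum_congr rfl
  intro x _
  have h1 := (hp x).1
  have h2 := (hp x).2
  have hne1 : (1:ℝ) - p x ≠ 0 := by linarith
  rw [hQp x]
  field_simp
end

section
/- With ℓ_x(P,Q) = (1 − P(T=t|X=x)/Q(T=t|x))², the pointwise bound |1 − P(T=t|X=x)/Q(T=t|x)| = ℓ_x(P,Q)^{1/2} gives |π_{y,t}(P) − π_{y,t}(Q)| ≤ k'_t · E_{x ∼ R_{y,t}}[ℓ_x(P,Q)^{1/2}], where R_{y,t}(x) = P(Y=y|X=x,T=t)P(X=x) / Σ_{x'} P(Y=y|X=x',T=t)P(X=x'), and k'_t = Σ_{x'} P(Y=y|X=x',T=t)P(X=x') / P(T=t). -/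
/-- With ℓ_x(P,Q) = (1 − P(T=t|X=x)/Q(T=t|x))², the bound becomes
|π_{y,t}(P) − π_{y,t}(Q)| ≤ k'_t · E_{x∼R_{y,t}}[ℓ_x(P,Q)^{1/2}], where
R_{y,t}(x) = P(Y=y|X=x,T=t)P(X=x) / Σ_{x'} P(Y=y|X=x',T=t)P(X=x') and
k'_t = Σ_{x'} P(Y=y|X=x',T=t)P(X=x') / P(T=t). -/
theorem pi_error_bound_proper_loss {𝒳 𝒴 : Type*} [Fintype 𝒳] [Fintype 𝒴]
    (pX : 𝒳 → ℝ) (pT QT : 𝒳 → Bool → ℝ) (w : 𝒳 → Bool → 𝒴 → ℝ)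
    (hpX : ∀ x, 0 < pX x) (hsum : ∑ x, pX x = 1)
    (hpT : ∀ x t, 0 < pT x t ∧ pT x t < 1) (hpTsum : ∀ x, pT x true + pT x false = 1)
    (hQT : ∀ x t, 0 < QT x t ∧ QT x t < 1) (hQTsum : ∀ x, QT x true + QT x false = 1)
    (hw : ∀ x t y, 0 ≤ w x t y) (hwsum : ∀ x t, ∑ y, w x t y = 1)
    (y : 𝒴) (t : Bool)
    (PT : ℝ) (hPT : PT = ∑ x, pX x * pT x t) (hPTpos : 0 < PT)
    (S : ℝ) (hS : S = ∑ x', w x' t y * pX x') (hSpos : 0 < S)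
    (R : 𝒳 → ℝ) (hR : ∀ x, R x = w x t y * pX x / S)
    (k' : ℝ) (hk' : k' = S / PT)
    (ℓ : 𝒳 → ℝ) (hℓ : ∀ x, ℓ x = (1 - pT x t / QT x t) ^ 2) :
    |(∑ x, w x t y * (pT x t / pT x t) * pX x / PT)
      - (∑ x, w x t y * (pT x t / QT x t) * pX x / PT)|
      ≤ k' * ∑ x, R x * Real.sqrt (ℓ x) := by
  have hrw : (∑ x, w x t y * (pT x t / pT x t) * pX x / PT)
      - (∑ x, w x t y * (pT x t / QT x t) * pX x / PT)
      = ∑ x, w x t y * pX x / PT * (1 - pT x t / QT x t) := by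
    rw [← Finset.sum_sub_distrib]
    apply Finset.sum_congr rfl
    intro x _
    rw [div_self (hpT x t).1.ne']
    ring
  have hRHS : k' * ∑ x, R x * Real.sqrt (ℓ x)
      = ∑ x, w x t y * pX x / PT * |1 - pT x t / QT x t| := by
    rw [Finset.mul_sum]
    apply Finset.sum_congr rfl
    intro x _
    rw [hR, hk', hℓ, Real.sqrt_sq_eq_abs]
    field_simp
  rw [hrw, hRHS]
  refine (Finset.abs_sum_le_sum_abs _ _).trans ?_
  apply Finset.sum_le_sum
  intro x _
  rw [abs_mul]
  gcongr
  exact le_of_eq (abs_of_nonneg (div_nonneg (mul_nonneg (hw x t y) (hpX x).le) hPTpos.le))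
end

section
/- The error E = |τ̂(P) − τ̂(Q)| of the IPTW estimand, where τ̂(Q) = Σ_y y[π_{y,1}(Q) − π_{y,0}(Q)], is bounded by Σ_{t∈{0,1}} Σ_y |y| · |π_{y,t}(P) − π_{y,t}(Q)|, and hence by Σ_t k'_t Σ_y |y| E_{x∼R_{y,t}}[ℓ_x(P,Q)^{1/2}]. In particular, if Q(T=t|x) = P(T=t|X=x) for all x, t then E = 0. -/
/-- Error bound for the IPTW estimand τ̂(Q) = Σ_y y·(π_{y,1}(Q) − π_{y,0}(Q)):
E = |τ̂(P) − τ̂(Q)| ≤ Σ_t Σ_y |y|·|π_{y,t}(P) − π_{y,t}(Q)|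
  ≤ Σ_t Σ_y |y|·k'_{y,t}·E_{x∼R_{y,t}}[ℓ_x(P,Q)^{1/2}],
and if Q(T=t|x) = P(T=t|X=x) for all x,t then E = 0. -/
theorem tau_error_bound {𝒳 𝒴 : Type*} [Fintype 𝒳] [Fintype 𝒴]
    (val : 𝒴 → ℝ)  -- the real values of the finite outcome space 𝒴 ⊂ ℝ
    (pX : 𝒳 → ℝ) (pT QT : 𝒳 → Bool → ℝ) (w : 𝒳 → Bool → 𝒴 → ℝ)
    (hpX : ∀ x, 0 < pX x) (hsum : ∑ x, pX x = 1)
    (hpT : ∀ x t, 0 < pT x t ∧ pT x t < 1) (hpTsum : ∀ x, pT x true + pT x false = 1)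
    (hQT : ∀ x t, 0 < QT x t ∧ QT x t < 1) (hQTsum : ∀ x, QT x true + QT x false = 1)
    (hw : ∀ x t y, 0 ≤ w x t y) (hwsum : ∀ x t, ∑ y, w x t y = 1)
    (PT : Bool → ℝ) (hPT : ∀ t, PT t = ∑ x, pX x * pT x t) (hPTpos : ∀ t, 0 < PT t)
    -- π_{y,t}(·) for an arbitrary propensity model
    (π : (𝒳 → Bool → ℝ) → 𝒴 → Bool → ℝ)
    (hπ : ∀ Qf y t, π Qf y t = ∑ x, w x t y * (pT x t / Qf x t) * pX x / PT t)
    -- τ̂(·)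
    (τ : (𝒳 → Bool → ℝ) → ℝ)
    (hτ : ∀ Qf, τ Qf = ∑ y, val y * (π Qf y true - π Qf y false))
    -- S_{y,t}, k'_{y,t}, R_{y,t}, ℓ_x
    (S : 𝒴 → Bool → ℝ) (hS : ∀ y t, S y t = ∑ x', w x' t y * pX x')
    (hSpos : ∀ y t, 0 < S y t)
    (k' : 𝒴 → Bool → ℝ) (hk' : ∀ y t, k' y t = S y t / PT t)
    (R : 𝒴 → Bool → 𝒳 → ℝ) (hR : ∀ y t x, R y t x = w x t y * pX x / S y t)
    (ℓ : Bool → 𝒳 → ℝ) (hℓ : ∀ t x, ℓ t x = (1 - pT x t / QT x t) ^ 2) :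
    |τ pT - τ QT| ≤ ∑ t : Bool, ∑ y, |val y| * |π pT y t - π QT y t| ∧
    |τ pT - τ QT| ≤ ∑ t : Bool, ∑ y, |val y| * (k' y t * ∑ x, R y t x * Real.sqrt (ℓ t x)) ∧
    ((∀ x t, QT x t = pT x t) → |τ pT - τ QT| = 0) := by

  have key1 : |τ pT - τ QT| ≤ ∑ t : Bool, ∑ y, |val y| * |π pT y t - π QT y t| := by
    rw [hτ, hτ, ← Finset.sum_sub_distrib, Fintype.sum_bool, ← Finset.sum_add_distrib]
    refine (Finset.abs_sum_le_sum_abs _ _).trans (Finset.sum_le_sum ?_)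
    intro y _
    have h : val y * (π pT y true - π pT y false) - val y * (π QT y true - π QT y false)
        = val y * (π pT y true - π QT y true) - val y * (π pT y false - π QT y false) := by ring
    rw [h]
    refine (abs_sub _ _).trans ?_
    rw [abs_mul, abs_mul]
  have key2 : ∀ y t, |π pT y t - π QT y t| ≤ k' y t * ∑ x, R y t x * Real.sqrt (ℓ t x) := by
    intro y t
    have hdiff : π pT y t - π QT y t
        = ∑ x, w x t y * pX x / PT t * (1 - pT x t / QT x t) := by
      rw [hπ, hπ, ← Finset.sum_sub_distrib]
      refine Finset.sum_congr rfl fun x _ => ?_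
      have h1 : pT x t / pT x t = 1 := div_self (hpT x t).1.ne'
      rw [h1]; ring
    have hrhs : k' y t * ∑ x, R y t x * Real.sqrt (ℓ t x)
        = ∑ x, w x t y * pX x / PT t * |1 - pT x t / QT x t| := by
      rw [hk', Finset.mul_sum]
      refine Finset.sum_congr rfl fun x _ => ?_
      rw [hR, hℓ, Real.sqrt_sq_eq_abs]
      have hS0 : S y t ≠ 0 := (hSpos y t).ne'
      have hcanc : S y t / PT t * (w x t y * pX x / S y t * |1 - pT x t / QT x t|)
          = S y t / S y t * (w x t y * pX x / PT t * |1 - pT x t / QT x t|) := by ring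
      rw [hcanc, div_self hS0, one_mul]
    rw [hdiff, hrhs]
    refine (Finset.abs_sum_le_sum_abs _ _).trans_eq (Finset.sum_congr rfl fun x _ => ?_)
    rw [abs_mul, abs_of_nonneg (div_nonneg (mul_nonneg (hw x t y) (hpX x).le) (hPTpos t).le)]
  refine ⟨key1, key1.trans ?_, ?_⟩
  · refine Finset.sum_le_sum fun t _ => Finset.sum_le_sum fun y _ => ?_
    exact mul_le_mul_of_nonneg_left (key2 y t) (abs_nonneg _)
  · intro h
    have hπeq : ∀ y t, π QT y t = π pT y t := by
      intro y t
      rw [hπ, hπ]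
      exact Finset.sum_congr rfl fun x _ => by rw [h x t]
    rw [hτ, hτ]
    simp only [hπeq, sub_self, abs_zero]
end
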